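/- arXiv:1910.02640 — 4 statements merged into one kernel-verified Lean document; each statement's English description precedes it below -/
import Mathlib

section
/- The image of the map v : {0,1}⁷ → ℤ⁴, v(b₀,…,b₆) = f(b₆,b₅,b₄) ⊙ ((−1)^{b₃}, (−1)^{b₂}, (−1)^{b₁}, (−1)^{b₀}), is exactly the set of pairs (p,q) ∈ Q₁₂ × Q₁₂ such that not both p and q are inner points, where the inner points of Q₁₂ are the four points (±1,±1); equivalently, the image consists of the 144 vectors of Q₁₂ × Q₁₂ minus the 16 vectors whose two symbols are both inner points. -/
/-- The basic map `f` from bit triples to 4-vectors over ℤ, given by the table. -/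
def f : Bool → Bool → Bool → (Fin 4 → ℤ)
  | false, false, false => ![1, 3, 1, 3]
  | false, false, true  => ![1, 3, 1, 1]
  | false, true,  true  => ![1, 3, 3, 1]
  | false, true,  false => ![1, 1, 3, 1]
  | true,  true,  false => ![3, 1, 3, 1]
  | true,  true,  true  => ![3, 1, 1, 1]
  | true,  false, true  => ![3, 1, 1, 3]
  | true,  false, false => ![1, 1, 1, 3]

/-- `(-1)^b` for a bit `b`. -/
def neg1 (b : Bool) : ℤ := if b then -1 else 1

/-- The 12-QAM constellation. -/
def Q12 : Set (ℤ × ℤ) :=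
  {p | p.1 ∈ ({-3, -1, 1, 3} : Set ℤ) ∧ p.2 ∈ ({-3, -1, 1, 3} : Set ℤ) ∧
    ¬(|p.1| = 3 ∧ |p.2| = 3)}

/-- An inner point of the 12-QAM constellation: `|x| = |y| = 1`. -/
def IsInner (p : ℤ × ℤ) : Prop := |p.1| = 1 ∧ |p.2| = 1

/-- The mapping `v(b₀,…,b₆) = f(b₆,b₅,b₄) ⊙ ((−1)^{b₃},(−1)^{b₂},(−1)^{b₁},(−1)^{b₀})`. -/
def v (b : Fin 7 → Bool) : Fin 4 → ℤ := fun i =>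
  f (b 6) (b 5) (b 4) i * ![neg1 (b 3), neg1 (b 2), neg1 (b 1), neg1 (b 0)] i

/-! Everything is decided by absolute values. Each entry of `f` is positive and the sign bits
`b₃,…,b₀` range over all sign patterns, so `v b` is any vector with `|v b| = f (b 6) (b 5) (b 4)`.
Membership in `Q12` and innerness only see `(|x|, |y|)`, which must lie in `{(1,1), (1,3), (3,1)}`,
and `f` lists exactly the `3 · 3 - 1 = 8` admissible pairs of such patterns. -/

def Q12Pos : Set (ℤ × ℤ) := {(1, 1), (1, 3), (3, 1)}

lemma mem_Q12_iff_abs (p : ℤ × ℤ) : p ∈ Q12 ↔ (|p.1|, |p.2|) ∈ Q12Pos := by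
  have h13 : ∀ x : ℤ, x ∈ ({-3, -1, 1, 3} : Set ℤ) ↔ |x| = 1 ∨ |x| = 3 := by
    intro x
    simp only [Set.mem_insert_iff, Set.mem_singleton_iff, abs_eq (zero_le_one' ℤ),
      abs_eq (show (0 : ℤ) ≤ 3 by norm_num)]
    omega
  simp only [Q12, Q12Pos, Set.mem_ofPred_eq, h13, Set.mem_insert_iff, Set.mem_singleton_iff,
    Prod.mk.injEq]
  omega

lemma isInner_iff (p : ℤ × ℤ) : IsInner p ↔ (|p.1|, |p.2|) = (1, 1) := by
  rw [IsInner, Prod.mk.injEq]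

lemma exists_f_eq_iff (u : Fin 4 → ℤ) :
    (∃ a b c, u = f a b c) ↔
      ((u 0, u 1) ∈ Q12Pos ∧ (u 2, u 3) ∈ Q12Pos) ∧
        ¬((u 0, u 1) = (1, 1) ∧ (u 2, u 3) = (1, 1)) := by
  constructor
  · rintro ⟨a, b, c, rfl⟩
    cases a <;> cases b <;> cases c <;> simp [f, Q12Pos]
  · rintro ⟨⟨h01, h23⟩, hnot⟩
    have hu : u = ![u 0, u 1, u 2, u 3] := by funext i; fin_cases i <;> rfl
    simp only [Q12Pos, Set.mem_insert_iff, Set.mem_singleton_iff, Prod.mk.injEq] at h01 h23 hnot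
    rcases h01 with ⟨h0, h1⟩ | ⟨h0, h1⟩ | ⟨h0, h1⟩ <;>
      rcases h23 with ⟨h2, h3⟩ | ⟨h2, h3⟩ | ⟨h2, h3⟩ <;>
      rw [hu, h0, h1, h2, h3] <;>
      first | decide | exact (hnot ⟨⟨h0, h1⟩, h2, h3⟩).elim

lemma f_pos (a b c : Bool) (i : Fin 4) : 0 < f a b c i := by
  revert a b c i; decide

lemma abs_neg1 (b : Bool) : |neg1 b| = 1 := by
  cases b <;> simp [neg1]

lemma abs_mul_neg1_decide_neg (x : ℤ) : |x| * neg1 (decide (x < 0)) = x := by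
  rcases lt_or_ge x 0 with hx | hx
  · simp [neg1, hx, abs_of_neg hx]
  · simp [neg1, hx.not_gt, abs_of_nonneg hx]

lemma abs_v (b : Fin 7 → Bool) : |v b| = f (b 6) (b 5) (b 4) := by
  funext i
  rw [Pi.abs_apply, v, abs_mul, abs_of_pos (f_pos ..)]
  fin_cases i <;> simp [abs_neg1]

lemma mem_range_v_iff (w : Fin 4 → ℤ) : w ∈ Set.range v ↔ ∃ a b c, |w| = f a b c := by
  constructor
  · rintro ⟨b, rfl⟩
    exact ⟨_, _, _, abs_v b⟩
  · rintro ⟨a, b, c, h⟩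
    have hw : ∀ i, f a b c i * neg1 (decide (w i < 0)) = w i := fun i => by
      rw [← congrFun h i, Pi.abs_apply, abs_mul_neg1_decide_neg]
    refine ⟨![decide (w 3 < 0), decide (w 2 < 0), decide (w 1 < 0), decide (w 0 < 0), c, b, a],
      funext fun i => ?_⟩
    fin_cases i <;> exact hw _

/-- the image of `v` is exactly the set of concatenated pairs from
`Q12 × Q12` such that not both symbols are inner points. -/
theorem v_range :
    Set.range v =
      {w : Fin 4 → ℤ | ((w 0, w 1) ∈ Q12 ∧ (w 2, w 3) ∈ Q12) ∧
        ¬(IsInner (w 0, w 1) ∧ IsInner (w 2, w 3))} := by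
  ext w
  rw [mem_range_v_iff, Set.mem_ofPred_eq, mem_Q12_iff_abs, mem_Q12_iff_abs, isInner_iff,
    isInner_iff]
  exact exists_f_eq_iff |w|
end

section
/- (Cluster decomposition) For every integer m ≥ 2, the cross constellation X_m equals the set {2^{m−1}·t + s : t ∈ X₁, s ∈ Q_{m−1}}, and this representation is unique: the map (t,s) ↦ 2^{m−1}t + s is a bijection from X₁ × Q_{m−1} onto X_m. In particular X_m has 3·4^m points. -/
/-- The uniform `4^n`-ary QAM constellation. -/
def Q (n : ℕ) : Set (ℤ × ℤ) :=
  {p | Odd p.1 ∧ Odd p.2 ∧ |p.1| ≤ 2 ^ n - 1 ∧ |p.2| ≤ 2 ^ n - 1}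

/-- The `(3×4^m)`-ary cross constellation. -/
def X (m : ℕ) : Set (ℤ × ℤ) :=
  {p | Odd p.1 ∧ Odd p.2 ∧ |p.1| ≤ 2 ^ (m + 1) - 1 ∧ |p.2| ≤ 2 ^ (m + 1) - 1 ∧
    ¬((2 : ℤ) ^ m < |p.1| ∧ (2 : ℤ) ^ m < |p.2|)}

/-!
Write `K = m - 1`. Every odd integer `x` is `2^K t + s` with `t, s` odd and `|s| < 2^K`, in exactly
one way, and then `|x|` lies strictly between `2^K (|t| - 1)` and `2^K (|t| + 1)`. Since `|t|` is
odd, the two conditions on a coordinate of a point of `X (K + 1)`, namely `|x| < 2^K * 4` and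
`2^K * 2 < |x|`, become `|t| < 4` and `2 < |t|`, which are the conditions defining `X 1`. Hence
`(t, s) ↦ 2^K t + s` is a bijection `X 1 × Q K ≃ X (K + 1)`, and `|X (K + 1)| = 12 * 4^K`.
-/

lemma abs_two_pow_mul (K : ℕ) (t : ℤ) : |2 ^ K * t| = 2 ^ K * |t| := by
  rw [abs_mul, abs_pow, abs_two]

section OneCoordinate

variable {K : ℕ} {t s : ℤ}

lemma abs_two_pow_mul_add_mem_Ioo (hs : |s| < 2 ^ K) :
    |2 ^ K * t + s| ∈ Set.Ioo (2 ^ K * (|t| - 1)) (2 ^ K * (|t| + 1)) := by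
  have habs := abs_two_pow_mul K t
  constructor
  · linarith [abs_sub_abs_le_abs_add (2 ^ K * t) s]
  · linarith [abs_add_le (2 ^ K * t) s]

lemma abs_two_pow_mul_add_lt_iff {e : ℤ} (ht : Odd t) (he : Even e) (hs : |s| < 2 ^ K) :
    |2 ^ K * t + s| < 2 ^ K * e ↔ |t| < e := by
  obtain ⟨hlo, hhi⟩ := abs_two_pow_mul_add_mem_Ioo (t := t) hs
  have hK : (0 : ℤ) < 2 ^ K := by positivity
  obtain ⟨a, ha⟩ := odd_abs.mpr ht
  obtain ⟨b, hb⟩ := he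
  constructor
  · intro h
    by_contra! hte
    have : e ≤ |t| - 1 := by omega
    linarith [mul_le_mul_of_nonneg_left this hK.le]
  · intro h
    have : |t| + 1 ≤ e := by omega
    linarith [mul_le_mul_of_nonneg_left this hK.le]

lemma lt_abs_two_pow_mul_add_iff {e : ℤ} (ht : Odd t) (he : Even e) (hs : |s| < 2 ^ K) :
    2 ^ K * e < |2 ^ K * t + s| ↔ e < |t| := by
  obtain ⟨hlo, hhi⟩ := abs_two_pow_mul_add_mem_Ioo (t := t) hs
  have hK : (0 : ℤ) < 2 ^ K := by positivity
  obtain ⟨a, ha⟩ := odd_abs.mpr ht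
  obtain ⟨b, hb⟩ := he
  constructor
  · intro h
    by_contra! hte
    have : |t| + 1 ≤ e := by omega
    linarith [mul_le_mul_of_nonneg_left this hK.le]
  · intro h
    have : e ≤ |t| - 1 := by omega
    linarith [mul_le_mul_of_nonneg_left this hK.le]

lemma eq_and_eq_of_two_pow_mul_add_eq {t' s' : ℤ} (ht : Odd t) (ht' : Odd t')
    (hs : |s| < 2 ^ K) (hs' : |s'| < 2 ^ K) (h : 2 ^ K * t + s = 2 ^ K * t' + s') :
    t = t' ∧ s = s' := by
  have hK : (0 : ℤ) < 2 ^ K := by positivity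
  have hdiff : 2 ^ K * |t - t'| < 2 ^ K * 2 := by
    rw [← abs_two_pow_mul, show 2 ^ K * (t - t') = s' - s by linarith]
    linarith [abs_sub s' s]
  have htt' : t = t' := by
    obtain ⟨a, rfl⟩ := ht
    obtain ⟨b, rfl⟩ := ht'
    have := lt_of_mul_lt_mul_left hdiff hK.le
    rw [abs_lt] at this
    omega
  subst htt'
  exact ⟨rfl, by linarith⟩

lemma exists_two_pow_mul_add (hK : K ≠ 0) {x : ℤ} (hx : Odd x) :
    ∃ t s, Odd t ∧ Odd s ∧ |s| < 2 ^ K ∧ x = 2 ^ K * t + s := by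
  set q := x / 2 ^ (K + 1)
  set r := x % 2 ^ (K + 1)
  have hr0 : 0 ≤ r := Int.emod_nonneg _ (by positivity)
  have hr : r < 2 ^ (K + 1) := Int.emod_lt_of_pos _ (by positivity)
  have hqr : 2 ^ (K + 1) * q + r = x := Int.mul_ediv_add_emod _ _
  rw [pow_succ] at hr hqr
  have hx_eq : x = 2 ^ K * (2 * q + 1) + (r - 2 ^ K) := by linear_combination -hqr
  have hpow : Even ((2 : ℤ) ^ K) := Int.even_pow.mpr ⟨even_two, hK⟩
  have hs : Odd (r - 2 ^ K) := by
    rw [show r - 2 ^ K = x - 2 ^ K * (2 * q + 1) by linear_combination -hx_eq]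
    exact hx.sub_even (hpow.mul_right _)
  refine ⟨2 * q + 1, r - 2 ^ K, odd_two_mul_add_one q, hs, ?_, hx_eq⟩
  obtain ⟨a, ha⟩ := hs
  obtain ⟨N, hN⟩ := hpow
  rw [abs_lt]
  omega

end OneCoordinate

def clusterMap (K : ℕ) (q : (ℤ × ℤ) × (ℤ × ℤ)) : ℤ × ℤ := (2 : ℤ) ^ K • q.1 + q.2

lemma two_pow_smul_add_mem_X_succ_iff {K : ℕ} (hK : K ≠ 0) {t s : ℤ × ℤ} (ht₁ : Odd t.1)
    (ht₂ : Odd t.2) (hs : s ∈ Q K) : (2 : ℤ) ^ K • t + s ∈ X (K + 1) ↔ t ∈ X 1 := by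
  obtain ⟨hs₁, hs₂, hs₁', hs₂'⟩ := hs
  rw [Int.le_sub_one_iff] at hs₁' hs₂'
  have hodd {u v : ℤ} (hv : Odd v) : Odd (2 ^ K * u + v) :=
    ((Int.even_pow.mpr ⟨even_two, hK⟩).mul_right u).add_odd hv
  have hbound {u v : ℤ} (hu : Odd u) (hv : |v| < 2 ^ K) :
      |2 ^ K * u + v| ≤ 2 ^ (K + 1 + 1) - 1 ↔ |u| ≤ 2 ^ (1 + 1) - 1 := by
    rw [Int.le_sub_one_iff, Int.le_sub_one_iff, pow_succ, pow_succ, mul_assoc]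
    exact abs_two_pow_mul_add_lt_iff hu ⟨2, rfl⟩ hv
  have hcross {u v : ℤ} (hu : Odd u) (hv : |v| < 2 ^ K) :
      2 ^ (K + 1) < |2 ^ K * u + v| ↔ 2 ^ 1 < |u| := by
    rw [pow_succ, pow_one]
    exact lt_abs_two_pow_mul_add_iff hu even_two hv
  simp only [X, Set.mem_ofPred_eq, Prod.fst_add, Prod.snd_add, Prod.smul_fst, Prod.smul_snd,
    smul_eq_mul]
  rw [hbound ht₁ hs₁', hbound ht₂ hs₂', hcross ht₁ hs₁', hcross ht₂ hs₂']
  simp only [hodd hs₁, hodd hs₂, ht₁, ht₂, true_and]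

lemma exists_two_pow_smul_add {K : ℕ} (hK : K ≠ 0) {p : ℤ × ℤ} (hp₁ : Odd p.1)
    (hp₂ : Odd p.2) :
    ∃ t s, Odd t.1 ∧ Odd t.2 ∧ s ∈ Q K ∧ p = (2 : ℤ) ^ K • t + s := by
  obtain ⟨t₁, s₁, ht₁, hs₁, hs₁', hp₁⟩ := exists_two_pow_mul_add hK hp₁
  obtain ⟨t₂, s₂, ht₂, hs₂, hs₂', hp₂⟩ := exists_two_pow_mul_add hK hp₂
  refine ⟨(t₁, t₂), (s₁, s₂), ht₁, ht₂, ?_, Prod.ext hp₁ hp₂⟩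
  exact ⟨hs₁, hs₂, Int.le_sub_one_iff.mpr hs₁', Int.le_sub_one_iff.mpr hs₂'⟩

lemma X_succ_eq_image_clusterMap {K : ℕ} (hK : K ≠ 0) :
    X (K + 1) = clusterMap K '' (X 1 ×ˢ Q K) := by
  ext p
  constructor
  · intro hp
    obtain ⟨t, s, ht₁, ht₂, hs, rfl⟩ := exists_two_pow_smul_add hK hp.1 hp.2.1
    exact ⟨(t, s), ⟨(two_pow_smul_add_mem_X_succ_iff hK ht₁ ht₂ hs).mp hp, hs⟩, rfl⟩
  · rintro ⟨⟨t, s⟩, ⟨ht, hs⟩, rfl⟩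
    exact (two_pow_smul_add_mem_X_succ_iff hK ht.1 ht.2.1 hs).mpr ht

lemma injOn_clusterMap (K : ℕ) :
    Set.InjOn (clusterMap K) (X 1 ×ˢ Q K) := by
  rintro ⟨t, s⟩ ⟨ht, hs⟩ ⟨t', s'⟩ ⟨ht', hs'⟩ h
  simp only [clusterMap, Prod.ext_iff, Prod.fst_add, Prod.snd_add, Prod.smul_fst, Prod.smul_snd,
    smul_eq_mul] at h ⊢
  obtain ⟨e₁, f₁⟩ := eq_and_eq_of_two_pow_mul_add_eq ht.1 ht'.1
    (Int.le_sub_one_iff.mp hs.2.2.1) (Int.le_sub_one_iff.mp hs'.2.2.1) h.1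
  obtain ⟨e₂, f₂⟩ := eq_and_eq_of_two_pow_mul_add_eq ht.2.1 ht'.2.1
    (Int.le_sub_one_iff.mp hs.2.2.2) (Int.le_sub_one_iff.mp hs'.2.2.2) h.2
  exact ⟨⟨e₁, e₂⟩, f₁, f₂⟩

/-- The uniform `2^n`-ary PAM constellation, whose square is `Q n`. -/
def pam (n : ℕ) : Set ℤ := {x | Odd x ∧ |x| ≤ 2 ^ n - 1}

lemma Q_eq_pam_prod (n : ℕ) : Q n = pam n ×ˢ pam n := by
  ext p
  simp only [Q, pam, Set.mem_prod, Set.mem_ofPred_eq]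
  tauto

lemma pam_succ_eq_image (k : ℕ) :
    pam (k + 1) = (fun j : ℤ ↦ 2 * j + 1) '' Set.Ico (-2 ^ k) (2 ^ k) := by
  ext x
  simp only [pam, Set.mem_ofPred_eq, Set.mem_image, Set.mem_Ico, abs_le, pow_succ]
  constructor
  · rintro ⟨⟨j, rfl⟩, hlo, hhi⟩
    exact ⟨j, ⟨by linarith, by linarith⟩, rfl⟩
  · rintro ⟨j, ⟨hlo, hhi⟩, rfl⟩
    exact ⟨odd_two_mul_add_one j, by linarith, by linarith⟩

lemma ncard_pam {n : ℕ} (hn : n ≠ 0) : (pam n).ncard = 2 ^ n := by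
  obtain ⟨k, rfl⟩ := Nat.exists_eq_succ_of_ne_zero hn
  have hinj : Function.Injective (fun j : ℤ ↦ 2 * j + 1) := fun a b h ↦ by dsimp only at h; omega
  rw [pam_succ_eq_image, Set.ncard_image_of_injective _ hinj, ← Finset.coe_Ico,
    Set.ncard_coe_finset, Int.card_Ico,
    show (2 : ℤ) ^ k - -2 ^ k = ((2 ^ (k + 1) : ℕ) : ℤ) by push_cast; ring, Int.toNat_natCast]

lemma ncard_Q {n : ℕ} (hn : n ≠ 0) : (Q n).ncard = 4 ^ n := by
  rw [Q_eq_pam_prod, Set.ncard_prod, ncard_pam hn, ← mul_pow]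
  norm_num

lemma ncard_X_one : (X 1).ncard = 12 := by
  have hbox : X 1 = ↑((Finset.Icc (-3) 3 ×ˢ Finset.Icc (-3) 3).filter fun p : ℤ × ℤ ↦
      Odd p.1 ∧ Odd p.2 ∧ |p.1| ≤ 3 ∧ |p.2| ≤ 3 ∧ ¬(2 < |p.1| ∧ 2 < |p.2|)) := by
    ext p
    simp only [Finset.coe_filter, Finset.mem_product, Finset.mem_Icc, ← abs_le]
    norm_num [X]
    exact fun _ _ h₁ h₂ _ ↦ ⟨h₁, h₂⟩
  rw [hbox, Set.ncard_coe_finset]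
  decide

/-- cluster decomposition: for `m ≥ 2`, `X m` equals
`{2^{m−1}·t + s : t ∈ X 1, s ∈ Q (m−1)}`, the representation is unique
(the map `(t,s) ↦ 2^{m−1}t + s` is a bijection from `X 1 × Q (m−1)` onto `X m`),
and `X m` has `3·4^m` points. -/
theorem cluster_decomposition (m : ℕ) (hm : 2 ≤ m) :
    (X m = {p | ∃ t ∈ X 1, ∃ s ∈ Q (m - 1), p = ((2 : ℤ) ^ (m - 1)) • t + s}) ∧
    (∀ t ∈ X 1, ∀ s ∈ Q (m - 1), ∀ t' ∈ X 1, ∀ s' ∈ Q (m - 1),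
      ((2 : ℤ) ^ (m - 1)) • t + s = ((2 : ℤ) ^ (m - 1)) • t' + s' → t = t' ∧ s = s') ∧
    (X m).ncard = 3 * 4 ^ m := by
  obtain ⟨K, rfl⟩ : ∃ K, m = K + 1 := ⟨m - 1, by omega⟩
  have hK : K ≠ 0 := by omega
  rw [Nat.add_sub_cancel]
  have hinj := injOn_clusterMap K
  refine ⟨?_, fun t ht s hs t' ht' s' hs' h ↦ Prod.mk_inj.mp (hinj ⟨ht, hs⟩ ⟨ht', hs'⟩ h), ?_⟩
  · rw [X_succ_eq_image_clusterMap hK]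
    ext p
    constructor
    · rintro ⟨⟨t, s⟩, ⟨ht, hs⟩, rfl⟩
      exact ⟨t, ht, s, hs, rfl⟩
    · rintro ⟨t, ht, s, hs, rfl⟩
      exact ⟨(t, s), ⟨ht, hs⟩, rfl⟩
  · rw [X_succ_eq_image_clusterMap hK, hinj.ncard_image, Set.ncard_prod, ncard_X_one, ncard_Q hK]
    ring
end

section
/- (Adjacent clusters) Let m ≥ 2 and let p = 2^{m−1}t + s and p' = 2^{m−1}t' + s' be points of X_m with t,t' ∈ X₁, s,s' ∈ Q_{m−1}, and t ≠ t'. If p and p' are at squared Euclidean distance 4 (Euclidean distance 2), then t and t' differ in exactly one coordinate and that difference has absolute value 2; moreover in that coordinate s and s' take the boundary values ±(2^{m−1} − 1) with opposite signs (facing each other), while in the other coordinate s = s' and p = p' in that coordinate. -/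
/-!
Write each coordinate of `p = 2^{m-1} t + s` as `M u + a` with `M = 2^{m-1}`, `u` odd and
`|a| ≤ M - 1`. Two odd cluster indices differ by a multiple of `2`, so distinct clusters put
their points at least `2M - 2(M - 1) = 2` apart in that coordinate, with equality only when
the indices differ by exactly `2` and both offsets sit on the facing boundaries. Since the only
integer solutions of `x² + y² = 4` are `(±2, 0)` and `(0, ±2)`, points at squared distance `4`
agree in one coordinate, hence share cluster index and offset there, and differ by `2` in the
other.
-/

theorem Int.sq_add_sq_eq_four {x y : ℤ} (h : x ^ 2 + y ^ 2 = 4) :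
    (x = 0 ∧ |y| = 2) ∨ (|x| = 2 ∧ y = 0) := by
  have hx : x ^ 2 ≤ 2 ^ 2 := by nlinarith [sq_nonneg y]
  have hy : y ^ 2 ≤ 2 ^ 2 := by nlinarith [sq_nonneg x]
  obtain ⟨hx, hx'⟩ := abs_le.mp (abs_le_of_sq_le_sq hx zero_le_two)
  obtain ⟨hy, hy'⟩ := abs_le.mp (abs_le_of_sq_le_sq hy zero_le_two)
  interval_cases x <;> interval_cases y <;> simp_all

section OddCluster

variable {M a b u v : ℤ}

theorem eq_and_eq_of_odd_mul_add_eq (hu : Odd u) (hv : Odd v) (ha : |a| ≤ M - 1)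
    (hb : |b| ≤ M - 1) (h : M * u + a = M * v + b) : u = v ∧ a = b := by
  obtain ⟨k, hk⟩ : Even (u - v) := hu.sub_odd hv
  rw [abs_le] at ha hb
  have hMk : 2 * M * k = b - a := by linear_combination h - M * hk
  have hk0 : k = 0 := by
    rcases lt_trichotomy k 0 with hk' | hk' | hk' <;> [nlinarith; exact hk'; nlinarith]
  subst hk0
  omega

theorem abs_sub_eq_two_of_odd_mul_add (hu : Odd u) (hv : Odd v) (ha : |a| ≤ M - 1)
    (hb : |b| ≤ M - 1) (hne : u ≠ v) (h : |M * u + a - (M * v + b)| = 2) :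
    |u - v| = 2 ∧ a = -b ∧ |a| = M - 1 := by
  obtain ⟨k, hk⟩ : Even (u - v) := hu.sub_odd hv
  rw [abs_le] at ha hb
  have hMk : 2 * M * k + a - b = M * u + a - (M * v + b) := by linear_combination -M * hk
  rw [← hMk] at h
  obtain ⟨hd, hd'⟩ := abs_le.mp h.le
  have hk1 : k = 1 ∨ k = -1 := by
    have hk0 : k ≠ 0 := by rintro rfl; exact hne (by linarith)
    rcases lt_trichotomy k 0 with hk' | hk' | hk'
    · right; nlinarith
    · exact absurd hk' hk0
    · left; nlinarith
  rcases hk1 with rfl | rfl <;> rw [hk] <;>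
    exact ⟨by norm_num, by omega, (abs_eq (by omega)).mpr (by omega)⟩

end OddCluster

theorem adjacent_clusters_general (m : ℕ) (t t' s s' : ℤ × ℤ)
    (ht : t ∈ X 1) (ht' : t' ∈ X 1) (hs : s ∈ Q (m - 1)) (hs' : s' ∈ Q (m - 1))
    (hne : t ≠ t')
    (hdist : ((((2 : ℤ) ^ (m - 1)) • t + s).1 - (((2 : ℤ) ^ (m - 1)) • t' + s').1) ^ 2 +
      ((((2 : ℤ) ^ (m - 1)) • t + s).2 - (((2 : ℤ) ^ (m - 1)) • t' + s').2) ^ 2 = 4) :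
    (t.1 ≠ t'.1 ∧ t.2 = t'.2 ∧ |t.1 - t'.1| = 2 ∧
      s.1 = -s'.1 ∧ |s.1| = 2 ^ (m - 1) - 1 ∧ s.2 = s'.2 ∧
      (((2 : ℤ) ^ (m - 1)) • t + s).2 = (((2 : ℤ) ^ (m - 1)) • t' + s').2) ∨
    (t.2 ≠ t'.2 ∧ t.1 = t'.1 ∧ |t.2 - t'.2| = 2 ∧
      s.2 = -s'.2 ∧ |s.2| = 2 ^ (m - 1) - 1 ∧ s.1 = s'.1 ∧
      (((2 : ℤ) ^ (m - 1)) • t + s).1 = (((2 : ℤ) ^ (m - 1)) • t' + s').1) := by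
  obtain ⟨ht₁, ht₂, -⟩ := ht
  obtain ⟨ht₁', ht₂', -⟩ := ht'
  obtain ⟨-, -, hs₁, hs₂⟩ := hs
  obtain ⟨-, -, hs₁', hs₂'⟩ := hs'
  simp only [Prod.fst_add, Prod.snd_add, Prod.smul_fst, Prod.smul_snd, smul_eq_mul]
    at hdist ⊢
  rcases Int.sq_add_sq_eq_four hdist with ⟨h₁, h₂⟩ | ⟨h₁, h₂⟩
  · have hp₁ := sub_eq_zero.mp h₁
    obtain ⟨htt₁, hss₁⟩ := eq_and_eq_of_odd_mul_add_eq ht₁ ht₁' hs₁ hs₁' hp₁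
    have htne₂ : t.2 ≠ t'.2 := fun h ↦ hne (Prod.ext htt₁ h)
    obtain ⟨hd, hss₂, hs₂_eq⟩ := abs_sub_eq_two_of_odd_mul_add ht₂ ht₂' hs₂ hs₂' htne₂ h₂
    exact Or.inr ⟨htne₂, htt₁, hd, hss₂, hs₂_eq, hss₁, hp₁⟩
  · have hp₂ := sub_eq_zero.mp h₂
    obtain ⟨htt₂, hss₂⟩ := eq_and_eq_of_odd_mul_add_eq ht₂ ht₂' hs₂ hs₂' hp₂
    have htne₁ : t.1 ≠ t'.1 := fun h ↦ hne (Prod.ext h htt₂)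
    obtain ⟨hd, hss₁, hs₁_eq⟩ := abs_sub_eq_two_of_odd_mul_add ht₁ ht₁' hs₁ hs₁' htne₁ h₁
    exact Or.inl ⟨htne₁, htt₂, hd, hss₁, hs₁_eq, hss₂, hp₂⟩

/-- adjacent clusters: if `p = 2^{m−1}t + s` and `p' = 2^{m−1}t' + s'`
with `t ≠ t'` are at squared distance 4, then `t, t'` differ in exactly one
coordinate by 2 in absolute value; in that coordinate `s, s'` take the boundary
values `±(2^{m−1} − 1)` with opposite signs, and in the other coordinate `s = s'`
and `p = p'`. -/
theorem adjacent_clusters (m : ℕ) (hm : 2 ≤ m) (t t' s s' : ℤ × ℤ)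
    (ht : t ∈ X 1) (ht' : t' ∈ X 1) (hs : s ∈ Q (m - 1)) (hs' : s' ∈ Q (m - 1))
    (hne : t ≠ t')
    (hmem : ((2 : ℤ) ^ (m - 1)) • t + s ∈ X m)
    (hmem' : ((2 : ℤ) ^ (m - 1)) • t' + s' ∈ X m)
    (hdist : ((((2 : ℤ) ^ (m - 1)) • t + s).1 - (((2 : ℤ) ^ (m - 1)) • t' + s').1) ^ 2 +
      ((((2 : ℤ) ^ (m - 1)) • t + s).2 - (((2 : ℤ) ^ (m - 1)) • t' + s').2) ^ 2 = 4) :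
    (t.1 ≠ t'.1 ∧ t.2 = t'.2 ∧ |t.1 - t'.1| = 2 ∧
      s.1 = -s'.1 ∧ |s.1| = 2 ^ (m - 1) - 1 ∧ s.2 = s'.2 ∧
      (((2 : ℤ) ^ (m - 1)) • t + s).2 = (((2 : ℤ) ^ (m - 1)) • t' + s').2) ∨
    (t.2 ≠ t'.2 ∧ t.1 = t'.1 ∧ |t.2 - t'.2| = 2 ∧
      s.2 = -s'.2 ∧ |s.2| = 2 ^ (m - 1) - 1 ∧ s.1 = s'.1 ∧
      (((2 : ℤ) ^ (m - 1)) • t + s).1 = (((2 : ℤ) ^ (m - 1)) • t' + s').1) :=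
  adjacent_clusters_general m t t' s s' ht ht' hs hs' hne hdist
end

section
/- (Theorem 2) Fix an integer m ≥ 2, set n = m − 1 and k = 4m + 3, and let g : {0,1}^{2n} → Q_n be a bijection with the Gray property (outputs at squared Euclidean distance 4 have inputs at Hamming distance 1). Define ε(t) = (|t − 1|/2) mod 2 for t ∈ {−3,−1,1,3}. For a bit sequence b = (b₀,…,b_{k−1}) ∈ {0,1}^k, let (t₁,t₂,t₃,t₄) = f(b_{k−1},b_{k−2},b_{k−3}) ⊙ ((−1)^{b_{k−4}}, (−1)^{b_{k−5}}, (−1)^{b_{k−6}}, (−1)^{b_{k−7}}), let (u₁,u₂) = g(b_{(k−7)/2},…,b_{k−8}) and (u₃,u₄) = g(b₀,…,b_{(k−9)/2}), and define v(b) = (2^{m−1}t₁ + (−1)^{ε(t₁)}u₁, 2^{m−1}t₂ + (−1)^{ε(t₂)}u₂, 2^{m−1}t₃ + (−1)^{ε(t₃)}u₃, 2^{m−1}t₄ + (−1)^{ε(t₄)}u₄). Then v is a Gray mapping: it is injective, its image is contained in X_m × X_m ⊆ ℤ⁴, and whenever v(b) and v(b') are at squared Euclidean distance 4 (Euclidean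 distance 2), the bit sequences b and b' have Hamming distance 1. -/
/-- The flip-parity function `ε(t) = (|t − 1|/2) mod 2`. -/
def eps (t : ℤ) : ℕ := (t - 1).natAbs / 2 % 2

/-- The cluster labels `(t₁,t₂,t₃,t₄) = f(b_{k−1},b_{k−2},b_{k−3}) ⊙
((−1)^{b_{k−4}},(−1)^{b_{k−5}},(−1)^{b_{k−6}},(−1)^{b_{k−7}})`, where `k = 4m+3`. -/
def tvec (m : ℕ) (b : Fin (4 * m + 3) → Bool) : Fin 4 → ℤ := fun i =>
  f (b ⟨4 * m + 2, by omega⟩) (b ⟨4 * m + 1, by omega⟩) (b ⟨4 * m, by omega⟩) i *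
    ![neg1 (b ⟨4 * m - 1, by omega⟩), neg1 (b ⟨4 * m - 2, by omega⟩),
      neg1 (b ⟨4 * m - 3, by omega⟩), neg1 (b ⟨4 * m - 4, by omega⟩)] i

/-- The general mapping `v` of Theorem 2, built from a within-cluster mapping `g`:
`v(b) = (2^{m−1}t₁ + (−1)^{ε(t₁)}u₁, …, 2^{m−1}t₄ + (−1)^{ε(t₄)}u₄)` with
`(u₁,u₂) = g(b_{(k−7)/2},…,b_{k−8})` and `(u₃,u₄) = g(b₀,…,b_{(k−9)/2})`. -/
def vgen (m : ℕ) (g : (Fin (2 * (m - 1)) → Bool) → ℤ × ℤ)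
    (b : Fin (4 * m + 3) → Bool) : Fin 4 → ℤ :=
  let t := tvec m b
  let u12 := g (fun j => b ⟨2 * (m - 1) + j.val, by have := j.isLt; omega⟩)
  let u34 := g (fun j => b ⟨j.val, by have := j.isLt; omega⟩)
  ![2 ^ (m - 1) * t 0 + (-1) ^ eps (t 0) * u12.1,
    2 ^ (m - 1) * t 1 + (-1) ^ eps (t 1) * u12.2,
    2 ^ (m - 1) * t 2 + (-1) ^ eps (t 2) * u34.1,
    2 ^ (m - 1) * t 3 + (-1) ^ eps (t 3) * u34.2]

/-! ### Auxiliary definitions and lemmas -/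

section Aux

/-- The abstract version of `tvec`, on seven explicit bits. -/
def tv (x y z s1 s2 s3 s4 : Bool) : Fin 4 → ℤ := fun i =>
  f x y z i * ![neg1 s1, neg1 s2, neg1 s3, neg1 s4] i

set_option maxRecDepth 100000 in
set_option synthInstance.maxHeartbeats 1000000 in
set_option synthInstance.maxSize 1000 in
set_option maxHeartbeats 2000000 in
lemma tv_vals : ∀ x y z s1 s2 s3 s4 : Bool,
    (∀ i, tv x y z s1 s2 s3 s4 i = 1 ∨ tv x y z s1 s2 s3 s4 i = -1 ∨
      tv x y z s1 s2 s3 s4 i = 3 ∨ tv x y z s1 s2 s3 s4 i = -3) ∧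
    ¬((tv x y z s1 s2 s3 s4 0 = 3 ∨ tv x y z s1 s2 s3 s4 0 = -3) ∧
      (tv x y z s1 s2 s3 s4 1 = 3 ∨ tv x y z s1 s2 s3 s4 1 = -3)) ∧
    ¬((tv x y z s1 s2 s3 s4 2 = 3 ∨ tv x y z s1 s2 s3 s4 2 = -3) ∧
      (tv x y z s1 s2 s3 s4 3 = 3 ∨ tv x y z s1 s2 s3 s4 3 = -3)) := by decide

set_option maxRecDepth 100000 in
set_option synthInstance.maxHeartbeats 1000000 in
set_option synthInstance.maxSize 1000 in
set_option maxHeartbeats 2000000 in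
lemma tv_inj : ∀ x y z s1 s2 s3 s4 x' y' z' s1' s2' s3' s4' : Bool,
    tv x y z s1 s2 s3 s4 0 = tv x' y' z' s1' s2' s3' s4' 0 →
    tv x y z s1 s2 s3 s4 1 = tv x' y' z' s1' s2' s3' s4' 1 →
    tv x y z s1 s2 s3 s4 2 = tv x' y' z' s1' s2' s3' s4' 2 →
    tv x y z s1 s2 s3 s4 3 = tv x' y' z' s1' s2' s3' s4' 3 →
    x = x' ∧ y = y' ∧ z = z' ∧ s1 = s1' ∧ s2 = s2' ∧ s3 = s3' ∧ s4 = s4' := by decide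

set_option maxRecDepth 100000 in
set_option synthInstance.maxHeartbeats 1000000 in
set_option synthInstance.maxSize 1000 in
set_option maxHeartbeats 8000000 in
lemma tv_gray : ∀ x y z s1 s2 s3 s4 x' y' z' s1' s2' s3' s4' : Bool,
    (tv x y z s1 s2 s3 s4 0 - tv x' y' z' s1' s2' s3' s4' 0)^2 +
    (tv x y z s1 s2 s3 s4 1 - tv x' y' z' s1' s2' s3' s4' 1)^2 +
    (tv x y z s1 s2 s3 s4 2 - tv x' y' z' s1' s2' s3' s4' 2)^2 +
    (tv x y z s1 s2 s3 s4 3 - tv x' y' z' s1' s2' s3' s4' 3)^2 = 4 →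
    ((if s4 ≠ s4' then 1 else 0) + (if s3 ≠ s3' then 1 else 0) + (if s2 ≠ s2' then 1 else 0)
      + (if s1 ≠ s1' then 1 else 0) + (if z ≠ z' then 1 else 0) + (if y ≠ y' then 1 else 0)
      + (if x ≠ x' then 1 else 0) : ℕ) = 1 := by decide

lemma eps_one : eps 1 = 0 := by decide
lemma eps_neg_one : eps (-1) = 1 := by decide
lemma eps_three : eps 3 = 1 := by decide
lemma eps_neg_three : eps (-3) = 0 := by decide

lemma coord_recover (P t t' u u' : ℤ) (hP : 2 ≤ P)
    (ht : t = 1 ∨ t = -1 ∨ t = 3 ∨ t = -3) (ht' : t' = 1 ∨ t' = -1 ∨ t' = 3 ∨ t' = -3)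
    (hu : -(P-1) ≤ u ∧ u ≤ P-1) (hu' : -(P-1) ≤ u' ∧ u' ≤ P-1)
    (heq : P*t + (-1)^(eps t)*u = P*t' + (-1)^(eps t')*u') : t = t' ∧ u = u' := by
  rcases ht with h|h|h|h <;> rcases ht' with h'|h'|h'|h' <;> subst h <;> subst h' <;>
    simp only [eps_one, eps_neg_one, eps_three, eps_neg_three, pow_zero, pow_one] at heq <;>
    constructor <;> omega

lemma coord_jump (P t t' u u' : ℤ) (hP : 2 ≤ P)
    (ht : t = 1 ∨ t = -1 ∨ t = 3 ∨ t = -3) (ht' : t' = 1 ∨ t' = -1 ∨ t' = 3 ∨ t' = -3)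
    (hu : -(P-1) ≤ u ∧ u ≤ P-1) (hu' : -(P-1) ≤ u' ∧ u' ≤ P-1)
    (hne : t ≠ t')
    (hd : (P*t + (-1)^(eps t)*u - (P*t' + (-1)^(eps t')*u'))^2 = 4) :
    u = u' ∧ (t = t' + 2 ∨ t' = t + 2) := by
  have h4 : (P*t + (-1)^(eps t)*u - (P*t' + (-1)^(eps t')*u') - 2) *
      (P*t + (-1)^(eps t)*u - (P*t' + (-1)^(eps t')*u') + 2) = 0 := by linear_combination hd
  rcases mul_eq_zero.mp h4 with h2 | h2 <;>
  rcases ht with h|h|h|h <;> rcases ht' with h'|h'|h'|h' <;> subst h <;> subst h' <;>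
    first
    | exact absurd rfl hne
    | (simp only [eps_one, eps_neg_one, eps_three, eps_neg_three, pow_zero, pow_one] at h2;
       constructor <;> omega)

lemma coord_basic (P t u : ℤ) (hP : 2 ≤ P) (hPe : P % 2 = 0)
    (ht : t = 1 ∨ t = -1 ∨ t = 3 ∨ t = -3)
    (hu : -(P-1) ≤ u ∧ u ≤ P-1) (huo : u % 2 = 1 ∨ u % 2 = -1) :
    Odd (P*t + (-1)^(eps t)*u) ∧
    |P*t + (-1)^(eps t)*u| ≤ 4*P-1 ∧
    (2*P < |P*t + (-1)^(eps t)*u| ↔ (t = 3 ∨ t = -3)) := by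
  rcases ht with h|h|h|h <;> subst h <;>
    simp only [eps_one, eps_neg_one, eps_three, eps_neg_three, pow_zero, pow_one] <;>
    refine ⟨Int.odd_iff.mpr (by omega), abs_le.mpr (by constructor <;> omega), ?_⟩ <;>
    rw [lt_abs] <;> constructor <;> intro h <;>
    first | omega | tauto | simp_all

/-- Index embeddings for the three blocks of bits. -/
def lowIdx (m : ℕ) (j : Fin (2*(m-1))) : Fin (4*m+3) := ⟨j.val, by have := j.2; omega⟩
def midIdx (m : ℕ) (j : Fin (2*(m-1))) : Fin (4*m+3) := ⟨2*(m-1)+j.val, by have := j.2; omega⟩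
def topIdx (m : ℕ) (hm : 2 ≤ m) (j : Fin 7) : Fin (4*m+3) :=
  ⟨2*(m-1)+(2*(m-1)+j.val), by have := j.2; omega⟩

/-- The two `g`-input blocks of a bit string. -/
def C12 (m : ℕ) (b : Fin (4*m+3) → Bool) : Fin (2*(m-1)) → Bool := fun j => b (midIdx m j)
def C34 (m : ℕ) (b : Fin (4*m+3) → Bool) : Fin (2*(m-1)) → Bool := fun j => b (lowIdx m j)

open Finset in
lemma card_split_gen (a c n : ℕ) (hn : n = a + (a + c)) (p : Fin n → Prop) [DecidablePred p] :
    (Finset.univ.filter p).card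
      = (Finset.univ.filter fun j : Fin a => p ⟨j.val, by omega⟩).card
      + (Finset.univ.filter fun j : Fin a => p ⟨a + j.val, by have := j.2; omega⟩).card
      + (Finset.univ.filter fun j : Fin c => p ⟨a + (a + j.val), by have := j.2; omega⟩).card := by
  subst hn
  classical
  let F : ℕ → ℕ := fun i => if h : i < a + (a + c) then (if p ⟨i, h⟩ then 1 else 0) else 0
  have hF : ∀ i : Fin (a + (a + c)), (if p i then 1 else 0) = F i.val := by
    intro i
    simp only [F, i.2, dif_pos, Fin.eta]
  rw [Finset.card_filter, Finset.card_filter, Finset.card_filter, Finset.card_filter]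
  calc ∑ i : Fin (a + (a + c)), (if p i then 1 else 0)
      = ∑ i : Fin (a + (a + c)), F i.val := Finset.sum_congr rfl (fun i _ => hF i)
    _ = ∑ i ∈ range (a + (a + c)), F i := Fin.sum_univ_eq_sum_range F _
    _ = ∑ i ∈ range a, F i + ∑ i ∈ range (a + c), F (a + i) := Finset.sum_range_add F a (a+c)
    _ = ∑ i ∈ range a, F i + (∑ i ∈ range a, F (a + i) + ∑ i ∈ range c, F (a + (a + i))) := by
        rw [Finset.sum_range_add (fun i => F (a + i)) a c]
    _ = _ := by
        rw [← Fin.sum_univ_eq_sum_range F a,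
          ← Fin.sum_univ_eq_sum_range (fun i => F (a + i)) a,
          ← Fin.sum_univ_eq_sum_range (fun i => F (a + (a + i))) c]
        have e1 : ∀ j : Fin a, F j.val = if p ⟨j.val, by omega⟩ then 1 else 0 := by
          intro j; simp only [F]; rw [dif_pos (by omega)]
        have e2 : ∀ j : Fin a, F (a + j.val)
            = if p ⟨a + j.val, by have := j.2; omega⟩ then 1 else 0 := by
          intro j; simp only [F]; rw [dif_pos (by have := j.2; omega)]
        have e3 : ∀ j : Fin c, F (a + (a + j.val))
            = if p ⟨a + (a + j.val), by have := j.2; omega⟩ then 1 else 0 := by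
          intro j; simp only [F]; rw [dif_pos (by have := j.2; omega)]
        rw [Finset.sum_congr rfl (fun j _ => e1 j), Finset.sum_congr rfl (fun j _ => e2 j),
          Finset.sum_congr rfl (fun j _ => e3 j), add_assoc]

lemma card_split (m : ℕ) (hm : 2 ≤ m) (p : Fin (4*m+3) → Prop) [DecidablePred p] :
    (Finset.univ.filter p).card =
      (Finset.univ.filter fun j => p (lowIdx m j)).card +
      (Finset.univ.filter fun j => p (midIdx m j)).card +
      (Finset.univ.filter fun j => p (topIdx m hm j)).card :=
  card_split_gen (2*(m-1)) 7 (4*m+3) (by omega) p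

lemma topIdx_vals (m : ℕ) (hm : 2 ≤ m) (b : Fin (4*m+3) → Bool) (j : Fin 7) :
    b (topIdx m hm j) = ![b ⟨4*m-4, by omega⟩, b ⟨4*m-3, by omega⟩, b ⟨4*m-2, by omega⟩,
      b ⟨4*m-1, by omega⟩, b ⟨4*m, by omega⟩, b ⟨4*m+1, by omega⟩, b ⟨4*m+2, by omega⟩] j := by
  fin_cases j <;> simp [topIdx] <;> exact congrArg b (Fin.ext (by simp; omega))

/-- Bridge: `tvec` is `tv` on the seven top bits. -/
lemma tvec_eq_tv (m : ℕ) (b : Fin (4*m+3) → Bool) :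
    tvec m b = tv (b ⟨4*m+2, by omega⟩) (b ⟨4*m+1, by omega⟩) (b ⟨4*m, by omega⟩)
      (b ⟨4*m-1, by omega⟩) (b ⟨4*m-2, by omega⟩) (b ⟨4*m-3, by omega⟩)
      (b ⟨4*m-4, by omega⟩) := rfl

lemma tvec_facts (m : ℕ) (b : Fin (4*m+3) → Bool) :
    (∀ i, tvec m b i = 1 ∨ tvec m b i = -1 ∨ tvec m b i = 3 ∨ tvec m b i = -3) ∧
    ¬((tvec m b 0 = 3 ∨ tvec m b 0 = -3) ∧ (tvec m b 1 = 3 ∨ tvec m b 1 = -3)) ∧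
    ¬((tvec m b 2 = 3 ∨ tvec m b 2 = -3) ∧ (tvec m b 3 = 3 ∨ tvec m b 3 = -3)) :=
  tv_vals _ _ _ _ _ _ _

lemma tvec_inj (m : ℕ) (b b' : Fin (4*m+3) → Bool)
    (h0 : tvec m b 0 = tvec m b' 0) (h1 : tvec m b 1 = tvec m b' 1)
    (h2 : tvec m b 2 = tvec m b' 2) (h3 : tvec m b 3 = tvec m b' 3) :
    b ⟨4*m+2, by omega⟩ = b' ⟨4*m+2, by omega⟩ ∧ b ⟨4*m+1, by omega⟩ = b' ⟨4*m+1, by omega⟩ ∧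
    b ⟨4*m, by omega⟩ = b' ⟨4*m, by omega⟩ ∧ b ⟨4*m-1, by omega⟩ = b' ⟨4*m-1, by omega⟩ ∧
    b ⟨4*m-2, by omega⟩ = b' ⟨4*m-2, by omega⟩ ∧ b ⟨4*m-3, by omega⟩ = b' ⟨4*m-3, by omega⟩ ∧
    b ⟨4*m-4, by omega⟩ = b' ⟨4*m-4, by omega⟩ :=
  tv_inj _ _ _ _ _ _ _ _ _ _ _ _ _ _ h0 h1 h2 h3

lemma top_zero (m : ℕ) (hm : 2 ≤ m) (b b' : Fin (4*m+3) → Bool)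
    (h : ∀ j : Fin 7, b (topIdx m hm j) = b' (topIdx m hm j)) :
    (Finset.univ.filter fun j : Fin 7 => b (topIdx m hm j) ≠ b' (topIdx m hm j)).card = 0 := by
  rw [Finset.card_eq_zero, Finset.filter_eq_empty_iff]
  exact fun j _ => not_not_intro (h j)

lemma top_all_eq (m : ℕ) (hm : 2 ≤ m) (b b' : Fin (4*m+3) → Bool)
    (hx : b ⟨4*m+2, by omega⟩ = b' ⟨4*m+2, by omega⟩)
    (hy : b ⟨4*m+1, by omega⟩ = b' ⟨4*m+1, by omega⟩)
    (hz : b ⟨4*m, by omega⟩ = b' ⟨4*m, by omega⟩)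
    (hs1 : b ⟨4*m-1, by omega⟩ = b' ⟨4*m-1, by omega⟩)
    (hs2 : b ⟨4*m-2, by omega⟩ = b' ⟨4*m-2, by omega⟩)
    (hs3 : b ⟨4*m-3, by omega⟩ = b' ⟨4*m-3, by omega⟩)
    (hs4 : b ⟨4*m-4, by omega⟩ = b' ⟨4*m-4, by omega⟩) :
    ∀ j : Fin 7, b (topIdx m hm j) = b' (topIdx m hm j) := by
  intro j
  rw [topIdx_vals m hm b j, topIdx_vals m hm b' j]
  fin_cases j <;> simp only [Matrix.cons_val_zero, Matrix.cons_val_one, Matrix.head_cons,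
    Matrix.cons_val_fin_one, Matrix.cons_val'] <;>
    first
    | exact hx | exact hy | exact hz | exact hs1 | exact hs2 | exact hs3 | exact hs4
    | (simp [Matrix.cons_val_succ]; first
        | exact hx | exact hy | exact hz | exact hs1 | exact hs2 | exact hs3 | exact hs4)

lemma topIdx_c (m : ℕ) (hm : 2 ≤ m) :
    topIdx m hm 0 = ⟨4*m-4, by omega⟩ ∧ topIdx m hm 1 = ⟨4*m-3, by omega⟩ ∧
    topIdx m hm 2 = ⟨4*m-2, by omega⟩ ∧ topIdx m hm 3 = ⟨4*m-1, by omega⟩ ∧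
    topIdx m hm 4 = ⟨4*m, by omega⟩ ∧ topIdx m hm 5 = ⟨4*m+1, by omega⟩ ∧
    topIdx m hm 6 = ⟨4*m+2, by omega⟩ := by
  refine ⟨?_, ?_, ?_, ?_, ?_, ?_, ?_⟩ <;> apply Fin.ext <;> simp [topIdx] <;> omega

lemma tvec_gray (m : ℕ) (hm : 2 ≤ m) (b b' : Fin (4*m+3) → Bool)
    (h : (tvec m b 0 - tvec m b' 0)^2 + (tvec m b 1 - tvec m b' 1)^2 +
      (tvec m b 2 - tvec m b' 2)^2 + (tvec m b 3 - tvec m b' 3)^2 = 4) :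
    (Finset.univ.filter fun j : Fin 7 => b (topIdx m hm j) ≠ b' (topIdx m hm j)).card = 1 := by
  have h1 := tv_gray (b ⟨4*m+2, by omega⟩) (b ⟨4*m+1, by omega⟩) (b ⟨4*m, by omega⟩)
    (b ⟨4*m-1, by omega⟩) (b ⟨4*m-2, by omega⟩) (b ⟨4*m-3, by omega⟩) (b ⟨4*m-4, by omega⟩)
    (b' ⟨4*m+2, by omega⟩) (b' ⟨4*m+1, by omega⟩) (b' ⟨4*m, by omega⟩)
    (b' ⟨4*m-1, by omega⟩) (b' ⟨4*m-2, by omega⟩) (b' ⟨4*m-3, by omega⟩) (b' ⟨4*m-4, by omega⟩) h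
  obtain ⟨c0, c1, c2, c3, c4, c5, c6⟩ := topIdx_c m hm
  rw [Finset.card_filter, Fin.sum_univ_seven, c0, c1, c2, c3, c4, c5, c6]
  exact h1

lemma u_facts (n : ℕ) (g : (Fin (2*n) → Bool) → ℤ × ℤ) (hgrange : Set.range g = Q n)
    (c : Fin (2*n) → Bool) :
    ((g c).1 % 2 = 1 ∨ (g c).1 % 2 = -1) ∧ (-(2^n-1) ≤ (g c).1 ∧ (g c).1 ≤ 2^n-1) ∧
    ((g c).2 % 2 = 1 ∨ (g c).2 % 2 = -1) ∧ (-(2^n-1) ≤ (g c).2 ∧ (g c).2 ≤ 2^n-1) := by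
  have hmem : g c ∈ Q n := hgrange ▸ Set.mem_range_self c
  obtain ⟨h1, h2, h3, h4⟩ := hmem
  rw [Int.odd_iff] at h1 h2
  rw [abs_le] at h3 h4
  exact ⟨Or.inl h1, h3, Or.inl h2, h4⟩

/-- The four coordinates of `vgen`, unfolded. -/
lemma vgen_zero (m : ℕ) (g : (Fin (2*(m-1)) → Bool) → ℤ × ℤ) (b : Fin (4*m+3) → Bool) :
    vgen m g b 0 = 2^(m-1) * tvec m b 0 + (-1)^(eps (tvec m b 0)) * (g (C12 m b)).1 := rfl
lemma vgen_one (m : ℕ) (g : (Fin (2*(m-1)) → Bool) → ℤ × ℤ) (b : Fin (4*m+3) → Bool) :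
    vgen m g b 1 = 2^(m-1) * tvec m b 1 + (-1)^(eps (tvec m b 1)) * (g (C12 m b)).2 := rfl
lemma vgen_two (m : ℕ) (g : (Fin (2*(m-1)) → Bool) → ℤ × ℤ) (b : Fin (4*m+3) → Bool) :
    vgen m g b 2 = 2^(m-1) * tvec m b 2 + (-1)^(eps (tvec m b 2)) * (g (C34 m b)).1 := rfl
lemma vgen_three (m : ℕ) (g : (Fin (2*(m-1)) → Bool) → ℤ × ℤ) (b : Fin (4*m+3) → Bool) :
    vgen m g b 3 = 2^(m-1) * tvec m b 3 + (-1)^(eps (tvec m b 3)) * (g (C34 m b)).2 := rfl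

lemma neg_one_pow_sq (e : ℕ) : (((-1:ℤ)^e))^2 = 1 := by
  rw [← pow_mul, mul_comm, pow_mul]; norm_num

end Aux

set_option maxHeartbeats 4000000 in
/-- Theorem 2: if `g` is a Gray bijection from `{0,1}^{2(m−1)}` onto
`Q (m−1)`, then `vgen m g` is a Gray mapping: it is injective, its image lies in
`X m × X m ⊆ ℤ⁴`, and outputs at squared Euclidean distance 4 have inputs at
Hamming distance 1. -/
theorem theorem2_gray_mapping (m : ℕ) (hm : 2 ≤ m)
    (g : (Fin (2 * (m - 1)) → Bool) → ℤ × ℤ)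
    (hginj : Function.Injective g)
    (hgrange : Set.range g = Q (m - 1))
    (hggray : ∀ c c' : Fin (2 * (m - 1)) → Bool,
      ((g c).1 - (g c').1) ^ 2 + ((g c).2 - (g c').2) ^ 2 = 4 →
      (Finset.univ.filter fun j => c j ≠ c' j).card = 1) :
    Function.Injective (vgen m g) ∧
    (∀ b : Fin (4 * m + 3) → Bool,
      (vgen m g b 0, vgen m g b 1) ∈ X m ∧ (vgen m g b 2, vgen m g b 3) ∈ X m) ∧
    (∀ b b' : Fin (4 * m + 3) → Bool,
      (∑ i : Fin 4, (vgen m g b i - vgen m g b' i) ^ 2) = 4 →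
      (Finset.univ.filter fun i : Fin (4 * m + 3) => b i ≠ b' i).card = 1) := by
  classical
  have hP2 : (2:ℤ) ≤ 2^(m-1) := by
    calc (2:ℤ) = 2^1 := (pow_one 2).symm
    _ ≤ 2^(m-1) := pow_le_pow_right₀ (by norm_num) (by omega)
  have hPe : ((2:ℤ)^(m-1)) % 2 = 0 := by
    rw [show m - 1 = (m-2) + 1 by omega, pow_succ]
    exact Int.mul_emod_left _ _
  have h2m : (2:ℤ)^m = 2*2^(m-1) := by
    conv_lhs => rw [show m = (m-1)+1 from by omega, pow_succ]
    ring
  have h2m1 : (2:ℤ)^(m+1) = 4*2^(m-1) := by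
    rw [pow_succ, h2m]; ring
  refine ⟨?_, ?_, ?_⟩
  · -- injectivity
    intro b b' hbb
    obtain ⟨hT, _, _⟩ := tvec_facts m b
    obtain ⟨hT', _, _⟩ := tvec_facts m b'
    obtain ⟨hu1o, hu1b, hu2o, hu2b⟩ := u_facts (m-1) g hgrange (C12 m b)
    obtain ⟨hu1o', hu1b', hu2o', hu2b'⟩ := u_facts (m-1) g hgrange (C12 m b')
    obtain ⟨hu3o, hu3b, hu4o, hu4b⟩ := u_facts (m-1) g hgrange (C34 m b)
    obtain ⟨hu3o', hu3b', hu4o', hu4b'⟩ := u_facts (m-1) g hgrange (C34 m b')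
    have e0 : vgen m g b 0 = vgen m g b' 0 := congrFun hbb 0
    have e1 : vgen m g b 1 = vgen m g b' 1 := congrFun hbb 1
    have e2 : vgen m g b 2 = vgen m g b' 2 := congrFun hbb 2
    have e3 : vgen m g b 3 = vgen m g b' 3 := congrFun hbb 3
    rw [vgen_zero m g b, vgen_zero m g b'] at e0
    rw [vgen_one m g b, vgen_one m g b'] at e1
    rw [vgen_two m g b, vgen_two m g b'] at e2
    rw [vgen_three m g b, vgen_three m g b'] at e3
    have r0 := coord_recover _ _ _ _ _ hP2 (hT 0) (hT' 0) hu1b hu1b' e0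
    have r1 := coord_recover _ _ _ _ _ hP2 (hT 1) (hT' 1) hu2b hu2b' e1
    have r2 := coord_recover _ _ _ _ _ hP2 (hT 2) (hT' 2) hu3b hu3b' e2
    have r3 := coord_recover _ _ _ _ _ hP2 (hT 3) (hT' 3) hu4b hu4b' e3
    have hc12 : C12 m b = C12 m b' := hginj (Prod.ext r0.2 r1.2)
    have hc34 : C34 m b = C34 m b' := hginj (Prod.ext r2.2 r3.2)
    obtain ⟨hx, hy, hz, hs1, hs2, hs3, hs4⟩ := tvec_inj m b b' r0.1 r1.1 r2.1 r3.1
    funext i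
    by_cases hi1 : i.val < 2*(m-1)
    · exact congrFun hc34 ⟨i.val, hi1⟩
    · by_cases hi2 : i.val < 2*(m-1) + 2*(m-1)
      · have e : midIdx m ⟨i.val - 2*(m-1), by omega⟩ = i := Fin.ext (by simp [midIdx]; omega)
        have := congrFun hc12 ⟨i.val - 2*(m-1), by omega⟩
        rwa [show C12 m b ⟨i.val - 2*(m-1), by omega⟩ = b (midIdx m ⟨i.val - 2*(m-1), by omega⟩)
          from rfl, show C12 m b' ⟨i.val - 2*(m-1), by omega⟩
          = b' (midIdx m ⟨i.val - 2*(m-1), by omega⟩) from rfl, e] at this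
      · have hi3 := i.2
        have hiv : i.val = 4*m-4 ∨ i.val = 4*m-3 ∨ i.val = 4*m-2 ∨ i.val = 4*m-1 ∨
            i.val = 4*m ∨ i.val = 4*m+1 ∨ i.val = 4*m+2 := by omega
        rcases hiv with h|h|h|h|h|h|h
        · rw [show i = ⟨4*m-4, by omega⟩ from Fin.ext h]; exact hs4
        · rw [show i = ⟨4*m-3, by omega⟩ from Fin.ext h]; exact hs3
        · rw [show i = ⟨4*m-2, by omega⟩ from Fin.ext h]; exact hs2
        · rw [show i = ⟨4*m-1, by omega⟩ from Fin.ext h]; exact hs1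
        · rw [show i = ⟨4*m, by omega⟩ from Fin.ext h]; exact hz
        · rw [show i = ⟨4*m+1, by omega⟩ from Fin.ext h]; exact hy
        · rw [show i = ⟨4*m+2, by omega⟩ from Fin.ext h]; exact hx
  · -- membership
    intro b
    obtain ⟨hT, hT01, hT23⟩ := tvec_facts m b
    obtain ⟨hu1o, hu1b, hu2o, hu2b⟩ := u_facts (m-1) g hgrange (C12 m b)
    obtain ⟨hu3o, hu3b, hu4o, hu4b⟩ := u_facts (m-1) g hgrange (C34 m b)
    have h0 := coord_basic _ _ _ hP2 hPe (hT 0) hu1b hu1o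
    have h1 := coord_basic _ _ _ hP2 hPe (hT 1) hu2b hu2o
    have h2 := coord_basic _ _ _ hP2 hPe (hT 2) hu3b hu3o
    have h3 := coord_basic _ _ _ hP2 hPe (hT 3) hu4b hu4o
    rw [← vgen_zero m g b] at h0
    rw [← vgen_one m g b] at h1
    rw [← vgen_two m g b] at h2
    rw [← vgen_three m g b] at h3
    constructor
    · refine ⟨h0.1, h1.1, ?_, ?_, ?_⟩
      · rw [h2m1]; exact h0.2.1
      · rw [h2m1]; exact h1.2.1
      · rw [h2m]
        intro hcross
        exact hT01 ⟨h0.2.2.mp hcross.1, h1.2.2.mp hcross.2⟩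
    · refine ⟨h2.1, h3.1, ?_, ?_, ?_⟩
      · rw [h2m1]; exact h2.2.1
      · rw [h2m1]; exact h3.2.1
      · rw [h2m]
        intro hcross
        exact hT23 ⟨h2.2.2.mp hcross.1, h3.2.2.mp hcross.2⟩
  · -- Gray property
    intro b b' hsum
    obtain ⟨hT, _, _⟩ := tvec_facts m b
    obtain ⟨hT', _, _⟩ := tvec_facts m b'
    obtain ⟨hu1o, hu1b, hu2o, hu2b⟩ := u_facts (m-1) g hgrange (C12 m b)
    obtain ⟨hu1o', hu1b', hu2o', hu2b'⟩ := u_facts (m-1) g hgrange (C12 m b')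
    obtain ⟨hu3o, hu3b, hu4o, hu4b⟩ := u_facts (m-1) g hgrange (C34 m b)
    obtain ⟨hu3o', hu3b', hu4o', hu4b'⟩ := u_facts (m-1) g hgrange (C34 m b')
    have ho0 := (coord_basic _ _ _ hP2 hPe (hT 0) hu1b hu1o).1
    have ho1 := (coord_basic _ _ _ hP2 hPe (hT 1) hu2b hu2o).1
    have ho2 := (coord_basic _ _ _ hP2 hPe (hT 2) hu3b hu3o).1
    have ho3 := (coord_basic _ _ _ hP2 hPe (hT 3) hu4b hu4o).1
    have ho0' := (coord_basic _ _ _ hP2 hPe (hT' 0) hu1b' hu1o').1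
    have ho1' := (coord_basic _ _ _ hP2 hPe (hT' 1) hu2b' hu2o').1
    have ho2' := (coord_basic _ _ _ hP2 hPe (hT' 2) hu3b' hu3o').1
    have ho3' := (coord_basic _ _ _ hP2 hPe (hT' 3) hu4b' hu4o').1
    rw [← vgen_zero m g b] at ho0
    rw [← vgen_one m g b] at ho1
    rw [← vgen_two m g b] at ho2
    rw [← vgen_three m g b] at ho3
    rw [← vgen_zero m g b'] at ho0'
    rw [← vgen_one m g b'] at ho1'
    rw [← vgen_two m g b'] at ho2'
    rw [← vgen_three m g b'] at ho3'
    rw [Int.odd_iff] at ho0 ho1 ho2 ho3 ho0' ho1' ho2' ho3'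
    rw [Fin.sum_univ_four] at hsum
    obtain ⟨d0, hd0⟩ : ∃ d, vgen m g b 0 - vgen m g b' 0 = d := ⟨_, rfl⟩
    obtain ⟨d1, hd1⟩ : ∃ d, vgen m g b 1 - vgen m g b' 1 = d := ⟨_, rfl⟩
    obtain ⟨d2, hd2⟩ : ∃ d, vgen m g b 2 - vgen m g b' 2 = d := ⟨_, rfl⟩
    obtain ⟨d3, hd3⟩ : ∃ d, vgen m g b 3 - vgen m g b' 3 = d := ⟨_, rfl⟩
    rw [hd0, hd1, hd2, hd3] at hsum
    have hev0 : d0 % 2 = 0 := by omega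
    have hev1 : d1 % 2 = 0 := by omega
    have hev2 : d2 % 2 = 0 := by omega
    have hev3 : d3 % 2 = 0 := by omega
    obtain ⟨e0, he0⟩ : ∃ e, d0 = 2*e := ⟨d0/2, by omega⟩
    obtain ⟨e1, he1⟩ : ∃ e, d1 = 2*e := ⟨d1/2, by omega⟩
    obtain ⟨e2, he2⟩ : ∃ e, d2 = 2*e := ⟨d2/2, by omega⟩
    obtain ⟨e3, he3⟩ : ∃ e, d3 = 2*e := ⟨d3/2, by omega⟩
    subst he0; subst he1; subst he2; subst he3
    have hsum' : e0^2 + e1^2 + e2^2 + e3^2 = 1 := by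
      have h4 : 4*(e0^2 + e1^2 + e2^2 + e3^2) = 4*1 := by linear_combination hsum
      linarith
    have hr0 : e0 = -1 ∨ e0 = 0 ∨ e0 = 1 := by
      have h1 : e0^2 ≤ 1 := by linarith [sq_nonneg e1, sq_nonneg e2, sq_nonneg e3]
      have h2 := abs_le.mp ((abs_le_one_iff_mul_self_le_one (a := e0)).mpr (by rw [← pow_two]; exact h1))
      omega
    have hr1 : e1 = -1 ∨ e1 = 0 ∨ e1 = 1 := by
      have h1 : e1^2 ≤ 1 := by linarith [sq_nonneg e0, sq_nonneg e2, sq_nonneg e3]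
      have h2 := abs_le.mp ((abs_le_one_iff_mul_self_le_one (a := e1)).mpr (by rw [← pow_two]; exact h1))
      omega
    have hr2 : e2 = -1 ∨ e2 = 0 ∨ e2 = 1 := by
      have h1 : e2^2 ≤ 1 := by linarith [sq_nonneg e0, sq_nonneg e1, sq_nonneg e3]
      have h2 := abs_le.mp ((abs_le_one_iff_mul_self_le_one (a := e2)).mpr (by rw [← pow_two]; exact h1))
      omega
    have hr3 : e3 = -1 ∨ e3 = 0 ∨ e3 = 1 := by
      have h1 : e3^2 ≤ 1 := by linarith [sq_nonneg e0, sq_nonneg e1, sq_nonneg e2]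
      have h2 := abs_le.mp ((abs_le_one_iff_mul_self_le_one (a := e3)).mpr (by rw [← pow_two]; exact h1))
      omega
    have hpat : ((2*e0)^2 = 4 ∧ 2*e1 = 0 ∧ 2*e2 = 0 ∧ 2*e3 = 0) ∨
        ((2*e1)^2 = 4 ∧ 2*e0 = 0 ∧ 2*e2 = 0 ∧ 2*e3 = 0) ∨
        ((2*e2)^2 = 4 ∧ 2*e0 = 0 ∧ 2*e1 = 0 ∧ 2*e3 = 0) ∨
        ((2*e3)^2 = 4 ∧ 2*e0 = 0 ∧ 2*e1 = 0 ∧ 2*e2 = 0) := by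
      rcases hr0 with hA0|hA0|hA0 <;> rcases hr1 with hA1|hA1|hA1 <;>
        rcases hr2 with hA2|hA2|hA2 <;> rcases hr3 with hA3|hA3|hA3 <;>
        subst hA0 <;> subst hA1 <;> subst hA2 <;> subst hA3 <;>
        (revert hsum'; norm_num)
    have hv0eq : 2*e0 = 0 → 2^(m-1) * tvec m b 0 + (-1)^(eps (tvec m b 0)) * (g (C12 m b)).1
        = 2^(m-1) * tvec m b' 0 + (-1)^(eps (tvec m b' 0)) * (g (C12 m b')).1 := by
      intro h; rw [← vgen_zero m g b, ← vgen_zero m g b']; omega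
    have hv1eq : 2*e1 = 0 → 2^(m-1) * tvec m b 1 + (-1)^(eps (tvec m b 1)) * (g (C12 m b)).2
        = 2^(m-1) * tvec m b' 1 + (-1)^(eps (tvec m b' 1)) * (g (C12 m b')).2 := by
      intro h; rw [← vgen_one m g b, ← vgen_one m g b']; omega
    have hv2eq : 2*e2 = 0 → 2^(m-1) * tvec m b 2 + (-1)^(eps (tvec m b 2)) * (g (C34 m b)).1
        = 2^(m-1) * tvec m b' 2 + (-1)^(eps (tvec m b' 2)) * (g (C34 m b')).1 := by
      intro h; rw [← vgen_two m g b, ← vgen_two m g b']; omega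
    have hv3eq : 2*e3 = 0 → 2^(m-1) * tvec m b 3 + (-1)^(eps (tvec m b 3)) * (g (C34 m b)).2
        = 2^(m-1) * tvec m b' 3 + (-1)^(eps (tvec m b' 3)) * (g (C34 m b')).2 := by
      intro h; rw [← vgen_three m g b, ← vgen_three m g b']; omega
    have hv0sq : (2*e0)^2 = 4 → (2^(m-1) * tvec m b 0 + (-1)^(eps (tvec m b 0)) * (g (C12 m b)).1
        - (2^(m-1) * tvec m b' 0 + (-1)^(eps (tvec m b' 0)) * (g (C12 m b')).1))^2 = 4 := by
      intro h; rw [← vgen_zero m g b, ← vgen_zero m g b', hd0]; exact h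
    have hv1sq : (2*e1)^2 = 4 → (2^(m-1) * tvec m b 1 + (-1)^(eps (tvec m b 1)) * (g (C12 m b)).2
        - (2^(m-1) * tvec m b' 1 + (-1)^(eps (tvec m b' 1)) * (g (C12 m b')).2))^2 = 4 := by
      intro h; rw [← vgen_one m g b, ← vgen_one m g b', hd1]; exact h
    have hv2sq : (2*e2)^2 = 4 → (2^(m-1) * tvec m b 2 + (-1)^(eps (tvec m b 2)) * (g (C34 m b)).1
        - (2^(m-1) * tvec m b' 2 + (-1)^(eps (tvec m b' 2)) * (g (C34 m b')).1))^2 = 4 := by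
      intro h; rw [← vgen_two m g b, ← vgen_two m g b', hd2]; exact h
    have hv3sq : (2*e3)^2 = 4 → (2^(m-1) * tvec m b 3 + (-1)^(eps (tvec m b 3)) * (g (C34 m b)).2
        - (2^(m-1) * tvec m b' 3 + (-1)^(eps (tvec m b' 3)) * (g (C34 m b')).2))^2 = 4 := by
      intro h; rw [← vgen_three m g b, ← vgen_three m g b', hd3]; exact h
    rw [card_split m hm]
    rcases hpat with ⟨ha, q1, q2, q3⟩ | ⟨ha, q0, q2, q3⟩ | ⟨ha, q0, q1, q3⟩ | ⟨ha, q0, q1, q2⟩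
    · -- coordinate 0 active
      have r1 := coord_recover _ _ _ _ _ hP2 (hT 1) (hT' 1) hu2b hu2b' (hv1eq q1)
      have r2 := coord_recover _ _ _ _ _ hP2 (hT 2) (hT' 2) hu3b hu3b' (hv2eq q2)
      have r3 := coord_recover _ _ _ _ _ hP2 (hT 3) (hT' 3) hu4b hu4b' (hv3eq q3)
      have hc34 : C34 m b = C34 m b' := hginj (Prod.ext r2.2 r3.2)
      have hlow : (Finset.univ.filter fun j => b (lowIdx m j) ≠ b' (lowIdx m j)).card = 0 := by
        rw [Finset.card_eq_zero, Finset.filter_eq_empty_iff]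
        exact fun j _ => not_not_intro (congrFun hc34 j)
      have hsq := hv0sq ha
      by_cases ht0 : tvec m b 0 = tvec m b' 0
      · rw [ht0] at hsq
        have hsp : ((-1:ℤ)^(eps (tvec m b' 0)))^2 = 1 := neg_one_pow_sq _
        have hA : (((-1:ℤ)^(eps (tvec m b' 0))) * ((g (C12 m b)).1 - (g (C12 m b')).1))^2 = 4 := by
          linear_combination hsq
        have hu14 : ((g (C12 m b)).1 - (g (C12 m b')).1)^2 = 4 := by
          linear_combination hA - ((g (C12 m b)).1 - (g (C12 m b')).1)^2 * hsp
        have hmid : (Finset.univ.filter fun j => b (midIdx m j) ≠ b' (midIdx m j)).card = 1 := by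
          have := hggray (C12 m b) (C12 m b') (by rw [r1.2]; simpa using hu14)
          exact this
        obtain ⟨hx, hy, hz, hs1, hs2, hs3, hs4⟩ := tvec_inj m b b' ht0 r1.1 r2.1 r3.1
        have htop := top_zero m hm b b' (top_all_eq m hm b b' hx hy hz hs1 hs2 hs3 hs4)
        omega
      · have rj := coord_jump _ _ _ _ _ hP2 (hT 0) (hT' 0) hu1b hu1b' ht0 hsq
        have hc12 : C12 m b = C12 m b' := hginj (Prod.ext rj.1 r1.2)
        have hmid : (Finset.univ.filter fun j => b (midIdx m j) ≠ b' (midIdx m j)).card = 0 := by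
          rw [Finset.card_eq_zero, Finset.filter_eq_empty_iff]
          exact fun j _ => not_not_intro (congrFun hc12 j)
        have hsum4 : (tvec m b 0 - tvec m b' 0)^2 + (tvec m b 1 - tvec m b' 1)^2 +
            (tvec m b 2 - tvec m b' 2)^2 + (tvec m b 3 - tvec m b' 3)^2 = 4 := by
          rw [r1.1, r2.1, r3.1]
          rcases rj.2 with h|h
          · linear_combination (tvec m b 0 - tvec m b' 0 + 2) * h
          · linear_combination (tvec m b' 0 - tvec m b 0 + 2) * h
        have htop := tvec_gray m hm b b' hsum4
        omega
    · -- coordinate 1 active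
      have r0 := coord_recover _ _ _ _ _ hP2 (hT 0) (hT' 0) hu1b hu1b' (hv0eq q0)
      have r2 := coord_recover _ _ _ _ _ hP2 (hT 2) (hT' 2) hu3b hu3b' (hv2eq q2)
      have r3 := coord_recover _ _ _ _ _ hP2 (hT 3) (hT' 3) hu4b hu4b' (hv3eq q3)
      have hc34 : C34 m b = C34 m b' := hginj (Prod.ext r2.2 r3.2)
      have hlow : (Finset.univ.filter fun j => b (lowIdx m j) ≠ b' (lowIdx m j)).card = 0 := by
        rw [Finset.card_eq_zero, Finset.filter_eq_empty_iff]
        exact fun j _ => not_not_intro (congrFun hc34 j)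
      have hsq := hv1sq ha
      by_cases ht1 : tvec m b 1 = tvec m b' 1
      · rw [ht1] at hsq
        have hsp : ((-1:ℤ)^(eps (tvec m b' 1)))^2 = 1 := neg_one_pow_sq _
        have hA : (((-1:ℤ)^(eps (tvec m b' 1))) * ((g (C12 m b)).2 - (g (C12 m b')).2))^2 = 4 := by
          linear_combination hsq
        have hu24 : ((g (C12 m b)).2 - (g (C12 m b')).2)^2 = 4 := by
          linear_combination hA - ((g (C12 m b)).2 - (g (C12 m b')).2)^2 * hsp
        have hmid : (Finset.univ.filter fun j => b (midIdx m j) ≠ b' (midIdx m j)).card = 1 := by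
          have := hggray (C12 m b) (C12 m b') (by rw [r0.2]; simpa using hu24)
          exact this
        obtain ⟨hx, hy, hz, hs1, hs2, hs3, hs4⟩ := tvec_inj m b b' r0.1 ht1 r2.1 r3.1
        have htop := top_zero m hm b b' (top_all_eq m hm b b' hx hy hz hs1 hs2 hs3 hs4)
        omega
      · have rj := coord_jump _ _ _ _ _ hP2 (hT 1) (hT' 1) hu2b hu2b' ht1 hsq
        have hc12 : C12 m b = C12 m b' := hginj (Prod.ext r0.2 rj.1)
        have hmid : (Finset.univ.filter fun j => b (midIdx m j) ≠ b' (midIdx m j)).card = 0 := by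
          rw [Finset.card_eq_zero, Finset.filter_eq_empty_iff]
          exact fun j _ => not_not_intro (congrFun hc12 j)
        have hsum4 : (tvec m b 0 - tvec m b' 0)^2 + (tvec m b 1 - tvec m b' 1)^2 +
            (tvec m b 2 - tvec m b' 2)^2 + (tvec m b 3 - tvec m b' 3)^2 = 4 := by
          rw [r0.1, r2.1, r3.1]
          rcases rj.2 with h|h
          · linear_combination (tvec m b 1 - tvec m b' 1 + 2) * h
          · linear_combination (tvec m b' 1 - tvec m b 1 + 2) * h
        have htop := tvec_gray m hm b b' hsum4
        omega
    · -- coordinate 2 active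
      have r0 := coord_recover _ _ _ _ _ hP2 (hT 0) (hT' 0) hu1b hu1b' (hv0eq q0)
      have r1 := coord_recover _ _ _ _ _ hP2 (hT 1) (hT' 1) hu2b hu2b' (hv1eq q1)
      have r3 := coord_recover _ _ _ _ _ hP2 (hT 3) (hT' 3) hu4b hu4b' (hv3eq q3)
      have hc12 : C12 m b = C12 m b' := hginj (Prod.ext r0.2 r1.2)
      have hmid : (Finset.univ.filter fun j => b (midIdx m j) ≠ b' (midIdx m j)).card = 0 := by
        rw [Finset.card_eq_zero, Finset.filter_eq_empty_iff]
        exact fun j _ => not_not_intro (congrFun hc12 j)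
      have hsq := hv2sq ha
      by_cases ht2 : tvec m b 2 = tvec m b' 2
      · rw [ht2] at hsq
        have hsp : ((-1:ℤ)^(eps (tvec m b' 2)))^2 = 1 := neg_one_pow_sq _
        have hA : (((-1:ℤ)^(eps (tvec m b' 2))) * ((g (C34 m b)).1 - (g (C34 m b')).1))^2 = 4 := by
          linear_combination hsq
        have hu34 : ((g (C34 m b)).1 - (g (C34 m b')).1)^2 = 4 := by
          linear_combination hA - ((g (C34 m b)).1 - (g (C34 m b')).1)^2 * hsp
        have hlow : (Finset.univ.filter fun j => b (lowIdx m j) ≠ b' (lowIdx m j)).card = 1 := by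
          have := hggray (C34 m b) (C34 m b') (by rw [r3.2]; simpa using hu34)
          exact this
        obtain ⟨hx, hy, hz, hs1, hs2, hs3, hs4⟩ := tvec_inj m b b' r0.1 r1.1 ht2 r3.1
        have htop := top_zero m hm b b' (top_all_eq m hm b b' hx hy hz hs1 hs2 hs3 hs4)
        omega
      · have rj := coord_jump _ _ _ _ _ hP2 (hT 2) (hT' 2) hu3b hu3b' ht2 hsq
        have hc34 : C34 m b = C34 m b' := hginj (Prod.ext rj.1 r3.2)
        have hlow : (Finset.univ.filter fun j => b (lowIdx m j) ≠ b' (lowIdx m j)).card = 0 := by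
          rw [Finset.card_eq_zero, Finset.filter_eq_empty_iff]
          exact fun j _ => not_not_intro (congrFun hc34 j)
        have hsum4 : (tvec m b 0 - tvec m b' 0)^2 + (tvec m b 1 - tvec m b' 1)^2 +
            (tvec m b 2 - tvec m b' 2)^2 + (tvec m b 3 - tvec m b' 3)^2 = 4 := by
          rw [r0.1, r1.1, r3.1]
          rcases rj.2 with h|h
          · linear_combination (tvec m b 2 - tvec m b' 2 + 2) * h
          · linear_combination (tvec m b' 2 - tvec m b 2 + 2) * h
        have htop := tvec_gray m hm b b' hsum4
        omega
    · -- coordinate 3 active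
      have r0 := coord_recover _ _ _ _ _ hP2 (hT 0) (hT' 0) hu1b hu1b' (hv0eq q0)
      have r1 := coord_recover _ _ _ _ _ hP2 (hT 1) (hT' 1) hu2b hu2b' (hv1eq q1)
      have r2 := coord_recover _ _ _ _ _ hP2 (hT 2) (hT' 2) hu3b hu3b' (hv2eq q2)
      have hc12 : C12 m b = C12 m b' := hginj (Prod.ext r0.2 r1.2)
      have hmid : (Finset.univ.filter fun j => b (midIdx m j) ≠ b' (midIdx m j)).card = 0 := by
        rw [Finset.card_eq_zero, Finset.filter_eq_empty_iff]
        exact fun j _ => not_not_intro (congrFun hc12 j)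
      have hsq := hv3sq ha
      by_cases ht3 : tvec m b 3 = tvec m b' 3
      · rw [ht3] at hsq
        have hsp : ((-1:ℤ)^(eps (tvec m b' 3)))^2 = 1 := neg_one_pow_sq _
        have hA : (((-1:ℤ)^(eps (tvec m b' 3))) * ((g (C34 m b)).2 - (g (C34 m b')).2))^2 = 4 := by
          linear_combination hsq
        have hu44 : ((g (C34 m b)).2 - (g (C34 m b')).2)^2 = 4 := by
          linear_combination hA - ((g (C34 m b)).2 - (g (C34 m b')).2)^2 * hsp
        have hlow : (Finset.univ.filter fun j => b (lowIdx m j) ≠ b' (lowIdx m j)).card = 1 := by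
          have := hggray (C34 m b) (C34 m b') (by rw [r2.2]; simpa using hu44)
          exact this
        obtain ⟨hx, hy, hz, hs1, hs2, hs3, hs4⟩ := tvec_inj m b b' r0.1 r1.1 r2.1 ht3
        have htop := top_zero m hm b b' (top_all_eq m hm b b' hx hy hz hs1 hs2 hs3 hs4)
        omega
      · have rj := coord_jump _ _ _ _ _ hP2 (hT 3) (hT' 3) hu4b hu4b' ht3 hsq
        have hc34 : C34 m b = C34 m b' := hginj (Prod.ext r2.2 rj.1)
        have hlow : (Finset.univ.filter fun j => b (lowIdx m j) ≠ b' (lowIdx m j)).card = 0 := by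
          rw [Finset.card_eq_zero, Finset.filter_eq_empty_iff]
          exact fun j _ => not_not_intro (congrFun hc34 j)
        have hsum4 : (tvec m b 0 - tvec m b' 0)^2 + (tvec m b 1 - tvec m b' 1)^2 +
            (tvec m b 2 - tvec m b' 2)^2 + (tvec m b 3 - tvec m b' 3)^2 = 4 := by
          rw [r0.1, r1.1, r2.1]
          rcases rj.2 with h|h
          · linear_combination (tvec m b 3 - tvec m b' 3 + 2) * h
          · linear_combination (tvec m b' 3 - tvec m b 3 + 2) * h
        have htop := tvec_gray m hm b b' hsum4
        omega
end
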